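/- arXiv:2406.07206 — 2 statements merged into one kernel-verified Lean document; each statement's English description precedes it below -/
import Mathlib

section
/- For j = 3, the Riemann sum ζ^n_{s,3} := Σ_{k ∈ ℤ³\{0}, n ≤ |k| ≤ 2n} 1/|k|^3 converges as n → ∞ to 4π log 2, with |ζ^n_{s,3} − 4π log 2| ≤ C/n for some constant C independent of n. -/
open scoped BigOperators Classical

/-- Euclidean norm of an integer lattice point in `ℤ³`. -/
noncomputable def nrm3 (k : Fin 3 → ℤ) : ℝ :=
  Real.sqrt (((k 0 : ℝ)) ^ 2 + ((k 1 : ℝ)) ^ 2 + ((k 2 : ℝ)) ^ 2)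

/-!
Write `G = 𝟙_[n, 2n] · t⁻³`. The sum is the integral over `ℝ³` of the step function `x ↦ G ‖⌊x⌋‖`,
since the unit cube `k + [0, 1)³` has volume one. As `‖x - ⌊x⌋‖ ≤ √3 ≤ 2`, this step function differs
from `G ‖x‖` by `O(n⁻⁴)` on the shell `n ≤ ‖x‖ ≤ 2n` (where `t⁻³` is `3n⁻⁴`-Lipschitz), and by
`O(n⁻³)` on the two shells of width 4 around the radii `n` and `2n`, whose volume is `O(n²)`: in total
`O(1/n)`. In polar coordinates `∫ G ‖x‖ dx = 4π ∫ₙ²ⁿ r² · r⁻³ dr = 4π log 2`.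
-/

open MeasureTheory Metric Set Module Real

theorem abs_one_div_pow_sub_one_div_pow_le {m s t : ℝ} (p : ℕ) (hm : 0 < m) (hs : m ≤ s)
    (ht : m ≤ t) : |1 / s ^ p - 1 / t ^ p| ≤ p / m ^ (p + 1) * |s - t| := by
  have hs0 := hm.trans_le hs
  have ht0 := hm.trans_le ht
  have hinv : |s⁻¹ - t⁻¹| ≤ |s - t| / m ^ 2 := by
    rw [inv_sub_inv hs0.ne' ht0.ne', abs_div, abs_sub_comm, abs_of_pos (mul_pos hs0 ht0), sq]
    gcongr
  have hmax : max |s⁻¹| |t⁻¹| ≤ m⁻¹ := by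
    rw [abs_of_pos (inv_pos.2 hs0), abs_of_pos (inv_pos.2 ht0)]
    exact max_le (inv_anti₀ hm hs) (inv_anti₀ hm ht)
  calc |1 / s ^ p - 1 / t ^ p| = |s⁻¹ ^ p - t⁻¹ ^ p| := by simp only [one_div, inv_pow]
    _ ≤ |s⁻¹ - t⁻¹| * p * max |s⁻¹| |t⁻¹| ^ (p - 1) := abs_pow_sub_pow_le ..
    _ ≤ |s - t| / m ^ 2 * p * m⁻¹ ^ (p - 1) := by gcongr
    _ = p / m ^ (p + 1) * |s - t| := by
      rcases p with _ | p
      · simp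
      · rw [Nat.add_sub_cancel, inv_pow]
        field_simp
        ring

theorem abs_indicator_one_div_pow_sub_le {a b δ r ρ : ℝ} (p : ℕ) (ha : 0 < a) (h : |r - ρ| ≤ δ) :
    |(Icc a b).indicator (fun t ↦ 1 / t ^ p) ρ - (Icc a b).indicator (fun t ↦ 1 / t ^ p) r| ≤
      (Icc a b).indicator (fun _ ↦ p * δ / a ^ (p + 1)) r +
        (Icc (a - δ) (a + δ)).indicator (fun _ ↦ 1 / a ^ p) r +
        (Icc (b - δ) (b + δ)).indicator (fun _ ↦ 1 / a ^ p) r := by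
  have hδ : 0 ≤ δ := (abs_nonneg _).trans h
  have hbound : ∀ t ∈ Icc a b, |1 / t ^ p| ≤ 1 / a ^ p := fun t ht ↦ by
    rw [abs_of_pos (by have := ha.trans_le ht.1; positivity)]
    gcongr
    exact ht.1
  have h1 : 0 ≤ (Icc a b).indicator (fun _ ↦ p * δ / a ^ (p + 1)) r :=
    indicator_nonneg (fun _ _ ↦ by positivity) r
  have h2 : 0 ≤ (Icc (a - δ) (a + δ)).indicator (fun _ ↦ 1 / a ^ p) r :=
    indicator_nonneg (fun _ _ ↦ by positivity) r
  have h3 : 0 ≤ (Icc (b - δ) (b + δ)).indicator (fun _ ↦ 1 / a ^ p) r :=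
    indicator_nonneg (fun _ _ ↦ by positivity) r
  obtain ⟨hlo, hhi⟩ := abs_le.1 h
  by_cases hρ : ρ ∈ Icc a b <;> by_cases hr : r ∈ Icc a b
  · rw [indicator_of_mem hρ, indicator_of_mem hr, indicator_of_mem hr]
    calc |1 / ρ ^ p - 1 / r ^ p| ≤ p / a ^ (p + 1) * |ρ - r| :=
          abs_one_div_pow_sub_one_div_pow_le p ha hρ.1 hr.1
      _ ≤ p / a ^ (p + 1) * δ := by rw [abs_sub_comm]; gcongr
      _ ≤ _ := by rw [div_mul_eq_mul_div]; linarith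
  · have hr' : r ∈ Icc (a - δ) (a + δ) ∨ r ∈ Icc (b - δ) (b + δ) := by
      rcases not_and_or.1 hr with hr | hr
      · exact .inl ⟨by linarith [hρ.1], by linarith⟩
      · exact .inr ⟨by linarith, by linarith [hρ.2]⟩
    rw [indicator_of_mem hρ, indicator_of_notMem hr, indicator_of_notMem hr, sub_zero]
    rcases hr' with hr' | hr' <;> rw [indicator_of_mem hr'] <;> linarith [hbound ρ hρ]
  · have hr' : r ∈ Icc (a - δ) (a + δ) ∨ r ∈ Icc (b - δ) (b + δ) := by
      rcases not_and_or.1 hρ with hρ | hρ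
      · exact .inl ⟨by linarith [hr.1], by linarith⟩
      · exact .inr ⟨by linarith, by linarith [hr.2]⟩
    rw [indicator_of_notMem hρ, indicator_of_mem hr, zero_sub, abs_neg]
    rcases hr' with hr' | hr' <;> rw [indicator_of_mem hr'] <;> linarith [hbound r hr]
  · rw [indicator_of_notMem hρ, indicator_of_notMem hr, sub_zero, abs_zero]
    positivity

theorem pow_pred_smul_indicator_one_div_pow_eq {d : ℕ} (hd : 0 < d) {a b : ℝ} (ha : 0 < a) :
    (fun y : ℝ ↦ y ^ (d - 1) • (Icc a b).indicator (fun t ↦ 1 / t ^ d) y)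
      = (Icc a b).indicator fun y ↦ y⁻¹ := by
  obtain ⟨e, rfl⟩ := Nat.exists_eq_add_one_of_ne_zero hd.ne'
  ext y
  by_cases hy : y ∈ Icc a b
  · have hy0 : y ≠ 0 := (ha.trans_le hy.1).ne'
    simp only [indicator_of_mem hy, Nat.add_sub_cancel, smul_eq_mul]
    field_simp
    ring
  · simp [hy]

theorem norm_preimage_Icc_eq_closedBall_sdiff_ball {E : Type*} [SeminormedAddGroup E] (a b : ℝ) :
    (‖·‖) ⁻¹' Icc a b = closedBall (0 : E) b \ ball 0 a := by
  ext x
  simp [and_comm]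

section Annulus

variable {E : Type*} [NormedAddCommGroup E] [NormedSpace ℝ E] [FiniteDimensional ℝ E]
  [MeasurableSpace E] [BorelSpace E] (μ : Measure E) [μ.IsAddHaarMeasure]

theorem integrable_indicator_const_norm (a b c : ℝ) :
    Integrable (fun x : E ↦ (Icc a b).indicator (fun _ ↦ c) ‖x‖) μ :=
  (integrable_indicator_iff (measurableSet_Icc.preimage measurable_norm)).2 <|
    integrableOn_const <| measure_ne_top_of_subset
      (fun x hx ↦ mem_closedBall_zero_iff.2 hx.2) measure_closedBall_lt_top.ne

variable [Nontrivial E]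

theorem measureReal_norm_preimage_Icc {a b : ℝ} (ha : 0 ≤ a) (hab : a ≤ b) :
    μ.real ((‖·‖) ⁻¹' Icc a b) = (b ^ finrank ℝ E - a ^ finrank ℝ E) * μ.real (ball 0 1) := by
  have hsub : ball (0 : E) a ⊆ closedBall 0 b :=
    ball_subset_closedBall.trans (closedBall_subset_closedBall hab)
  rw [norm_preimage_Icc_eq_closedBall_sdiff_ball,
    measureReal_sdiff hsub measurableSet_ball measure_closedBall_lt_top.ne,
    ← Measure.addHaar_real_closedBall_eq_addHaar_real_ball, Measure.addHaar_real_closedBall μ _ ha,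
    Measure.addHaar_real_closedBall μ _ (ha.trans hab)]
  ring

theorem integral_indicator_const_norm {a b : ℝ} (ha : 0 ≤ a) (hab : a ≤ b) (c : ℝ) :
    ∫ x, (Icc a b).indicator (fun _ ↦ c) ‖x‖ ∂μ =
      (b ^ finrank ℝ E - a ^ finrank ℝ E) * μ.real (ball 0 1) * c := by
  rw [← measureReal_norm_preimage_Icc μ ha hab, ← smul_eq_mul,
    ← integral_indicator_const c (measurableSet_Icc.preimage measurable_norm)]
  rfl

theorem integrable_indicator_one_div_pow_finrank_norm {a b : ℝ} (ha : 0 < a) :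
    Integrable (fun x : E ↦ (Icc a b).indicator (fun t ↦ 1 / t ^ finrank ℝ E) ‖x‖) μ := by
  rw [integrable_fun_norm_addHaar, pow_pred_smul_indicator_one_div_pow_eq finrank_pos ha]
  exact ((integrable_indicator_iff measurableSet_Icc).2
    ((continuousOn_inv₀.mono fun y hy ↦ (ha.trans_le hy.1).ne').integrableOn_Icc)).integrableOn

theorem integral_indicator_one_div_pow_finrank_norm {a b : ℝ} (ha : 0 < a) (hab : a ≤ b) :
    ∫ x, (Icc a b).indicator (fun t ↦ 1 / t ^ finrank ℝ E) ‖x‖ ∂μ =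
      finrank ℝ E * μ.real (ball 0 1) * log (b / a) := by
  rw [integral_fun_norm_addHaar, pow_pred_smul_indicator_one_div_pow_eq finrank_pos ha,
    setIntegral_indicator measurableSet_Icc, inter_eq_right.2 ((Icc_subset_Ioi_iff hab).2 ha),
    integral_Icc_eq_integral_Ioc, ← intervalIntegral.integral_of_le hab, integral_inv,
    nsmul_eq_mul, smul_eq_mul, mul_assoc]
  rw [uIcc_of_le hab]
  exact fun h ↦ ha.not_ge h.1

theorem abs_integral_indicator_one_div_pow_finrank_sub_le {a b δ : ℝ} (ha : 0 < a) (hδa : δ ≤ a)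
    (hab : a ≤ b) {ρ : E → ℝ} (hρ : ∀ x, |‖x‖ - ρ x| ≤ δ)
    (hρint : Integrable (fun x ↦ (Icc a b).indicator (fun t ↦ 1 / t ^ finrank ℝ E) (ρ x)) μ) :
    |∫ x, (Icc a b).indicator (fun t ↦ 1 / t ^ finrank ℝ E) (ρ x) ∂μ -
        ∫ x, (Icc a b).indicator (fun t ↦ 1 / t ^ finrank ℝ E) ‖x‖ ∂μ| ≤
      (finrank ℝ E * δ / a ^ (finrank ℝ E + 1) * (b ^ finrank ℝ E - a ^ finrank ℝ E) +
        ((a + δ) ^ finrank ℝ E - (a - δ) ^ finrank ℝ E + (b + δ) ^ finrank ℝ E -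
          (b - δ) ^ finrank ℝ E) / a ^ finrank ℝ E) * μ.real (ball 0 1) := by
  have hδ : 0 ≤ δ := (abs_nonneg _).trans (hρ 0)
  set d := finrank ℝ E
  have hI := integrable_indicator_const_norm μ (E := E)
  have hbound : ∀ x, ‖(Icc a b).indicator (fun t ↦ 1 / t ^ d) (ρ x) -
      (Icc a b).indicator (fun t ↦ 1 / t ^ d) ‖x‖‖ ≤
        (Icc a b).indicator (fun _ ↦ d * δ / a ^ (d + 1)) ‖x‖ +
        (Icc (a - δ) (a + δ)).indicator (fun _ ↦ 1 / a ^ d) ‖x‖ +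
        (Icc (b - δ) (b + δ)).indicator (fun _ ↦ 1 / a ^ d) ‖x‖ :=
    fun x ↦ abs_indicator_one_div_pow_sub_le d ha (hρ x)
  rw [← integral_sub hρint (integrable_indicator_one_div_pow_finrank_norm μ ha)]
  refine (norm_integral_le_of_norm_le (((hI _ _ _).add (hI _ _ _)).add (hI _ _ _))
    (ae_of_all _ hbound)).trans_eq ?_
  rw [integral_add' ((hI _ _ _).add (hI _ _ _)) (hI _ _ _), integral_add' (hI _ _ _) (hI _ _ _),
    integral_indicator_const_norm μ ha.le hab,
    integral_indicator_const_norm μ (by linarith) (by linarith),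
    integral_indicator_const_norm μ (by linarith) (by linarith)]
  ring

end Annulus

section Lattice

variable {ι : Type*}

def latticePoint (k : ι → ℤ) : EuclideanSpace ℝ ι := WithLp.toLp 2 fun i ↦ (k i : ℝ)

noncomputable def latticeFloor (x : EuclideanSpace ℝ ι) : ι → ℤ := fun i ↦ ⌊x i⌋

theorem measurable_latticeFloor : Measurable (latticeFloor (ι := ι)) := by
  unfold latticeFloor
  fun_prop

theorem latticeFloor_preimage_singleton (k : ι → ℤ) :
    latticeFloor ⁻¹' {k} = WithLp.ofLp ⁻¹' univ.pi fun i ↦ Ico (k i : ℝ) (k i + 1) := by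
  ext x
  simp [latticeFloor, funext_iff, Int.floor_eq_iff]

theorem latticeFloor_comp_eq_sum_indicator {F : (ι → ℤ) → ℝ} {s : Finset (ι → ℤ)}
    (hF : ∀ k ∉ s, F k = 0) :
    (fun x ↦ F (latticeFloor x)) =
      fun x ↦ ∑ k ∈ s, (latticeFloor ⁻¹' {k}).indicator (fun _ ↦ F k) x := by
  ext x
  have hx : x ∈ latticeFloor ⁻¹' {latticeFloor x} := rfl
  rw [Finset.sum_eq_single (latticeFloor x), indicator_of_mem hx]
  · exact fun k _ hk ↦ indicator_of_notMem (fun h ↦ hk h.symm) _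
  · intro hs
    rw [indicator_of_mem hx, hF _ hs]

variable [Fintype ι]

theorem volume_latticeFloor_preimage_singleton (k : ι → ℤ) :
    volume (latticeFloor ⁻¹' {k}) = 1 := by
  rw [latticeFloor_preimage_singleton, (PiLp.volume_preserving_ofLp ι).measure_preimage
    (MeasurableSet.univ_pi fun _ ↦ measurableSet_Ico).nullMeasurableSet, volume_pi_pi]
  simp

theorem integrable_indicator_latticeFloor_preimage_singleton (k : ι → ℤ) (c : ℝ) :
    Integrable ((latticeFloor ⁻¹' {k}).indicator fun _ ↦ c) :=
  (integrable_indicator_iff (measurable_latticeFloor (measurableSet_singleton k))).2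
    (integrableOn_const (by simp [volume_latticeFloor_preimage_singleton]))

theorem integrable_latticeFloor_comp {F : (ι → ℤ) → ℝ} (hF : (Function.support F).Finite) :
    Integrable fun x ↦ F (latticeFloor x) := by
  rw [latticeFloor_comp_eq_sum_indicator (s := hF.toFinset) (by simp)]
  exact integrable_finsetSum _ fun k _ ↦ integrable_indicator_latticeFloor_preimage_singleton k _

theorem integral_latticeFloor_comp {F : (ι → ℤ) → ℝ} (hF : (Function.support F).Finite) :
    ∫ x, F (latticeFloor x) = ∑' k, F k := by
  rw [tsum_eq_sum (s := hF.toFinset) (by simp),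
    latticeFloor_comp_eq_sum_indicator (s := hF.toFinset) (by simp),
    integral_finsetSum _ fun k _ ↦ integrable_indicator_latticeFloor_preimage_singleton k _]
  congr! 1 with k
  rw [integral_indicator_const _ (measurable_latticeFloor (measurableSet_singleton k)),
    measureReal_def, volume_latticeFloor_preimage_singleton, ENNReal.toReal_one, one_smul]

theorem norm_sub_latticePoint_latticeFloor_le (x : EuclideanSpace ℝ ι) :
    ‖x - latticePoint (latticeFloor x)‖ ≤ √(Fintype.card ι) := by
  rw [EuclideanSpace.norm_eq]
  gcongr
  calc ∑ i, ‖(x - latticePoint (latticeFloor x)) i‖ ^ 2 ≤ ∑ _i : ι, (1 : ℝ) := by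
        gcongr with i
        simp only [PiLp.sub_apply, latticePoint, latticeFloor, Real.norm_eq_abs, sq_abs]
        nlinarith [Int.floor_le (x i), Int.lt_floor_add_one (x i)]
    _ = Fintype.card ι := by simp

theorem finite_setOf_norm_latticePoint_le (R : ℝ) :
    {k : ι → ℤ | ‖latticePoint k‖ ≤ R}.Finite := by
  refine (Set.Finite.pi (t := fun _ ↦ Icc (-⌈R⌉) ⌈R⌉) fun _ ↦ finite_Icc _ _).subset
    fun k hk i _ ↦ ?_
  have h : |(k i : ℝ)| ≤ R := (PiLp.norm_apply_le (latticePoint k) i).trans hk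
  rw [abs_le] at h
  constructor <;> · rw [← Int.cast_le (R := ℝ)]; push_cast; linarith [Int.le_ceil R]

end Lattice

theorem nrm3_eq_norm_latticePoint (k : Fin 3 → ℤ) : nrm3 k = ‖latticePoint k‖ := by
  rw [EuclideanSpace.norm_eq, Fin.sum_univ_three]
  simp [nrm3, latticePoint, sq_abs]

theorem ite_nrm3_eq_indicator {a b : ℝ} (ha : 0 < a) (k : Fin 3 → ℤ) :
    (if k ≠ 0 ∧ a ≤ nrm3 k ∧ nrm3 k ≤ b then 1 / nrm3 k ^ 3 else 0) =
      (Icc a b).indicator (fun t ↦ 1 / t ^ 3) (nrm3 k) := by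
  by_cases hk : k = 0
  · subst hk
    simp [nrm3, ha.not_ge]
  · simp [hk, indicator_apply]

theorem abs_tsum_indicator_nrm3_sub_le (n : ℕ) (hn : 2 ≤ n) :
    |∑' k, (Icc (n : ℝ) (2 * n)).indicator (fun t ↦ 1 / t ^ 3) (nrm3 k) - 4 * π * log 2| ≤
      150 * π / n := by
  have hn2 : (2 : ℝ) ≤ n := by exact_mod_cast hn
  have hn0 : (0 : ℝ) < n := by linarith
  have hd : finrank ℝ (EuclideanSpace ℝ (Fin 3)) = 3 := finrank_euclideanSpace_fin
  have hV : volume.real (ball (0 : EuclideanSpace ℝ (Fin 3)) 1) = 4 / 3 * π := by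
    simp only [measureReal_def, EuclideanSpace.volume_ball_fin_three, ENNReal.ofReal_one, one_pow,
      one_mul, ENNReal.toReal_ofReal (by positivity : 0 ≤ π * 4 / 3)]
    ring
  have hclose (x : EuclideanSpace ℝ (Fin 3)) : |‖x‖ - ‖latticePoint (latticeFloor x)‖| ≤ 2 :=
    (abs_norm_sub_norm_le _ _).trans ((norm_sub_latticePoint_latticeFloor_le x).trans
      (sqrt_le_iff.2 ⟨by norm_num, by norm_num⟩))
  have hsupp : (Function.support fun k : Fin 3 → ℤ ↦
      (Icc (n : ℝ) (2 * n)).indicator (fun t ↦ 1 / t ^ 3) ‖latticePoint k‖).Finite :=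
    (finite_setOf_norm_latticePoint_le (2 * n)).subset fun k hk ↦ (mem_of_indicator_ne_zero hk).2
  have hshell := integral_indicator_one_div_pow_finrank_norm
    (volume : Measure (EuclideanSpace ℝ (Fin 3))) hn0 (by linarith : (n : ℝ) ≤ 2 * n)
  have herr := abs_integral_indicator_one_div_pow_finrank_sub_le
    (volume : Measure (EuclideanSpace ℝ (Fin 3))) hn0 hn2 (by linarith : (n : ℝ) ≤ 2 * n) hclose
    (by rw [hd]; exact integrable_latticeFloor_comp hsupp)
  rw [hd, Nat.cast_ofNat] at hshell herr
  rw [hV, mul_div_cancel_right₀ 2 hn0.ne'] at hshell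
  simp_rw [nrm3_eq_norm_latticePoint]
  rw [← integral_latticeFloor_comp hsupp, show 4 * π * log 2 = 3 * (4 / 3 * π) * log 2 by ring,
    ← hshell]
  calc _ ≤ _ := herr
    _ = (102 * n ^ 2 + 32) / n ^ 3 * (4 / 3 * π) := by
      rw [hV]
      field_simp
      ring
    _ ≤ 110 / n * (4 / 3 * π) := by
      gcongr ?_ * _
      rw [div_le_div_iff₀ (by positivity) hn0]
      nlinarith
    _ ≤ 150 * π / n := by
      rw [div_mul_eq_mul_div, div_le_div_iff_of_pos_right hn0]
      nlinarith [pi_pos]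

/-- The Riemann sum `ζ^n_{s,3} = Σ_{k ∈ ℤ³\{0}, n ≤ |k| ≤ 2n} |k|^{-3}` converges to
`4π log 2`, with `|ζ^n_{s,3} - 4π log 2| ≤ C/n` for a constant `C` independent of `n`. -/
theorem riemann_sum_shell_3d_crit :
    ∃ C : ℝ, ∀ n : ℕ, 1 ≤ n →
      |(∑' k : Fin 3 → ℤ,
          if k ≠ 0 ∧ (n : ℝ) ≤ nrm3 k ∧ nrm3 k ≤ 2 * n then 1 / nrm3 k ^ 3 else 0)
        - 4 * Real.pi * Real.log 2| ≤ C / n := by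
  set S : ℕ → ℝ := fun n ↦ (∑' k : Fin 3 → ℤ,
    if k ≠ 0 ∧ (n : ℝ) ≤ nrm3 k ∧ nrm3 k ≤ 2 * n then 1 / nrm3 k ^ 3 else 0) - 4 * π * log 2
  refine ⟨150 * π + |S 1|, fun n hn ↦ ?_⟩
  change |S n| ≤ _
  rcases hn.eq_or_lt with rfl | hn
  · simp [pi_pos.le]
  · calc |S n| ≤ 150 * π / n := by
          simpa only [S, ite_nrm3_eq_indicator (by positivity : (0 : ℝ) < n)]
            using abs_tsum_indicator_nrm3_sub_le n hn
      _ ≤ _ := by gcongr; exact le_add_of_nonneg_right (abs_nonneg _)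
end

section
/- Let {σ_{k,j}}_{k∈ℤ³\{0}, j∈{1,2}} be given by σ_{k,j} = θ_{k,j} a_{k,j} e^{ik·x}, where for each k, {k/|k|, a_{k,1}, a_{k,2}} is an orthonormal basis of ℝ³. Suppose |θ_{k,j}|² = c(1_{n≤|k|≤2n})/|k|³ for all k, j (isotropic coefficients with constant c > 0). Then for every B ∈ L²(𝕋³;ℝ³) (complex Fourier expansion B = Σ_{h,l} b^{h,l} a_{h,l} e^{ih·x} with divergence-free structure), one has the exact identity Σ_{k,j} ‖σ_{k,j} × B‖²_{L²} = (4/3)·c·ζ^n_{s,3}·‖B‖²_{L²}, where ζ^n_{s,3} = Σ_{n≤|k|≤2n} |k|^{-3}. -/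
open scoped BigOperators Classical

/-- Cross product of vectors in `ℂ³`. -/
noncomputable def crossC (u v : Fin 3 → ℂ) : Fin 3 → ℂ :=
  ![u 1 * v 2 - u 2 * v 1, u 2 * v 0 - u 0 * v 2, u 0 * v 1 - u 1 * v 0]

/-- Squared Euclidean norm of a vector in `ℂ³`. -/
noncomputable def vnSq (v : Fin 3 → ℂ) : ℝ := ∑ i, ‖v i‖ ^ 2

/-- Cross product of a real vector with a complex vector. -/
noncomputable def crossRC (u : Fin 3 → ℝ) (v : Fin 3 → ℂ) : Fin 3 → ℂ :=
  crossC (fun i => (u i : ℂ)) v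

noncomputable def dotZ (k : Fin 3 → ℤ) (v : Fin 3 → ℂ) : ℂ := ∑ i, (k i : ℂ) * v i

lemma vnSq_nonneg (v : Fin 3 → ℂ) : 0 ≤ vnSq v :=
  Finset.sum_nonneg fun i _ => sq_nonneg _

lemma lagrange (u : Fin 3 → ℝ) (v : Fin 3 → ℂ) :
    vnSq (crossRC u v) =
      (∑ i, u i * u i) * vnSq v - ‖∑ i, (u i : ℂ) * v i‖ ^ 2 := by
  simp only [vnSq, crossRC, crossC, Fin.sum_univ_three, Complex.sq_norm,
    Complex.normSq_apply, Matrix.cons_val_zero, Matrix.cons_val_one, Matrix.head_cons,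
    Matrix.cons_val_two, Matrix.tail_cons, Complex.sub_re, Complex.sub_im,
    Complex.add_re, Complex.add_im, Complex.mul_re, Complex.mul_im,
    Complex.ofReal_re, Complex.ofReal_im]
  ring

lemma gram (e : Fin 3 → Fin 3 → ℝ)
    (h : ∀ m m', ∑ i, e m i * e m' i = if m = m' then 1 else 0) :
    ∀ i i', ∑ m, e m i * e m i' = if i = i' then 1 else 0 := by
  have hM : (Matrix.of e) * (Matrix.of e).transpose = 1 := by
    ext m m'
    simpa [Matrix.mul_apply, Matrix.one_apply] using h m m'
  have hM' : (Matrix.of e).transpose * (Matrix.of e) = 1 := by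
    rwa [mul_eq_one_comm] at hM
  intro i i'
  have := congrFun (congrFun hM' i) i'
  simpa [Matrix.mul_apply, Matrix.one_apply, mul_comm] using this

lemma sum_inner_sq (e : Fin 3 → Fin 3 → ℝ)
    (h : ∀ m m', ∑ i, e m i * e m' i = if m = m' then 1 else 0)
    (v : Fin 3 → ℂ) :
    ∑ m, ‖∑ i, (e m i : ℂ) * v i‖ ^ 2 = vnSq v := by
  have hg := gram e h
  have h00 := hg 0 0; have h11 := hg 1 1; have h22 := hg 2 2
  have h01 := hg 0 1; have h02 := hg 0 2; have h12 := hg 1 2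
  simp only [Fin.sum_univ_three] at h00 h11 h22 h01 h02 h12
  simp only [Fin.reduceEq, if_false, if_true, reduceIte] at h00 h11 h22 h01 h02 h12
  simp only [vnSq, Fin.sum_univ_three, Complex.sq_norm, Complex.normSq_apply,
    Complex.add_re, Complex.add_im, Complex.mul_re, Complex.mul_im,
    Complex.ofReal_re, Complex.ofReal_im]
  linear_combination ((v 0).re^2+(v 0).im^2)*h00 + ((v 1).re^2+(v 1).im^2)*h11
    + ((v 2).re^2+(v 2).im^2)*h22 + 2*((v 0).re*(v 1).re+(v 0).im*(v 1).im)*h01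
    + 2*((v 0).re*(v 2).re+(v 0).im*(v 2).im)*h02
    + 2*((v 1).re*(v 2).re+(v 1).im*(v 2).im)*h12

lemma nrm3_nonneg (k : Fin 3 → ℤ) : 0 ≤ nrm3 k := Real.sqrt_nonneg _

lemma nrm3_sq (k : Fin 3 → ℤ) :
    nrm3 k ^ 2 = ((k 0 : ℝ)) ^ 2 + ((k 1 : ℝ)) ^ 2 + ((k 2 : ℝ)) ^ 2 :=
  Real.sq_sqrt (by positivity)

lemma nrm3_pos (k : Fin 3 → ℤ) (hk : k ≠ 0) : 0 < nrm3 k := by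
  have h : ¬(((k 0:ℝ))^2 + ((k 1:ℝ))^2 + ((k 2:ℝ))^2 = 0) := by
    intro h
    apply hk
    have h0 : (k 0:ℝ) = 0 := by nlinarith [sq_nonneg ((k 0:ℝ)), sq_nonneg ((k 1:ℝ)), sq_nonneg ((k 2:ℝ))]
    have h1 : (k 1:ℝ) = 0 := by nlinarith [sq_nonneg ((k 0:ℝ)), sq_nonneg ((k 1:ℝ)), sq_nonneg ((k 2:ℝ))]
    have h2 : (k 2:ℝ) = 0 := by nlinarith [sq_nonneg ((k 0:ℝ)), sq_nonneg ((k 1:ℝ)), sq_nonneg ((k 2:ℝ))]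
    funext i
    fin_cases i
    · exact_mod_cast h0
    · exact_mod_cast h1
    · exact_mod_cast h2
  exact Real.sqrt_pos.mpr (lt_of_le_of_ne (by positivity) (Ne.symm h))

lemma dot_sq_le (k : Fin 3 → ℤ) (v : Fin 3 → ℂ) :
    ‖dotZ k v‖ ^ 2 ≤ nrm3 k ^ 2 * vnSq v := by
  have h := lagrange (fun i => (k i : ℝ)) v
  have h2 : (∑ i, (k i:ℝ) * (k i:ℝ)) = nrm3 k ^ 2 := by
    rw [nrm3_sq]; simp [Fin.sum_univ_three]; ring
  have h3 := vnSq_nonneg (crossRC (fun i => (k i : ℝ)) v)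
  rw [h, h2] at h3
  have : (∑ i, ((k i:ℝ):ℂ) * v i) = dotZ k v := by simp [dotZ]
  rw [this] at h3
  linarith

lemma key (k : Fin 3 → ℤ) (hk : k ≠ 0) (a : Fin 2 → Fin 3 → ℝ)
    (hak : ∀ j, ∑ i, a j i * (k i : ℝ) = 0)
    (haunit : ∀ j, ∑ i, a j i * a j i = 1)
    (haperp : ∑ i, a 0 i * a 1 i = 0)
    (v : Fin 3 → ℂ) :
    ∑ j : Fin 2, vnSq (crossRC (a j) v)
      = vnSq v + ‖dotZ k v‖ ^ 2 / nrm3 k ^ 2 := by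
  set N := nrm3 k with hN
  have hNpos : 0 < N := nrm3_pos k hk
  have hsq : ((k 0:ℝ))^2 + ((k 1:ℝ))^2 + ((k 2:ℝ))^2 = N ^ 2 := (nrm3_sq k).symm
  set e : Fin 3 → Fin 3 → ℝ := ![fun i => (k i : ℝ) / N, a 0, a 1] with he
  have hgram : ∀ m m', ∑ i, e m i * e m' i = if m = m' then 1 else 0 := by
    intro m m'
    have hk0 := hak 0; have hk1 := hak 1
    have hu0 := haunit 0; have hu1 := haunit 1
    simp only [Fin.sum_univ_three] at hk0 hk1 hu0 hu1 haperp
    fin_cases m <;> fin_cases m' <;>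
      simp [he, Fin.sum_univ_three]
    · field_simp; linear_combination hsq
    · field_simp; linear_combination hk0
    · field_simp; linear_combination hk1
    · field_simp; linear_combination hk0
    · linear_combination hu0
    · linear_combination haperp
    · field_simp; linear_combination hk1
    · linear_combination haperp
    · linear_combination hu1
  have hpars := sum_inner_sq e hgram v
  rw [Fin.sum_univ_three] at hpars
  have he0 : ‖∑ i, ((e 0 i : ℝ):ℂ) * v i‖ ^ 2
      = ‖dotZ k v‖ ^ 2 / N ^ 2 := by
    have : (∑ i, ((e 0 i : ℝ):ℂ) * v i) = (N:ℂ)⁻¹ * dotZ k v := by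
      simp only [he, Matrix.cons_val_zero, dotZ, Finset.mul_sum]
      refine Finset.sum_congr rfl fun i _ => ?_
      push_cast
      field_simp
    rw [this, norm_mul, mul_pow, norm_inv, Complex.norm_real, Real.norm_eq_abs,
      abs_of_pos hNpos]
    field_simp
  have hl0 := lagrange (a 0) v
  have hl1 := lagrange (a 1) v
  rw [haunit 0, one_mul] at hl0
  rw [haunit 1, one_mul] at hl1
  have he1 : e 1 = a 0 := rfl
  have he2 : e 2 = a 1 := rfl
  rw [he0, he1, he2] at hpars
  rw [Fin.sum_univ_two, hl0, hl1]
  linarith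

lemma cross_sq_le (u : Fin 3 → ℝ) (hu : ∑ i, u i * u i = 1) (v : Fin 3 → ℂ) :
    vnSq (crossRC u v) ≤ vnSq v := by
  rw [lagrange, hu, one_mul]
  have := sq_nonneg (‖∑ i, ((u i : ℝ):ℂ) * v i‖)
  linarith

/-- negation of the `i`-th coordinate, as a permutation of `ℤ³`. -/
noncomputable def negE (i : Fin 3) : (Fin 3 → ℤ) ≃ (Fin 3 → ℤ) :=
  Function.Involutive.toPerm (fun k => Function.update k i (-(k i))) (by
    intro k
    funext j
    rcases eq_or_ne j i with rfl | h
    · simp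
    · simp [Function.update_of_ne h])

lemma negE_apply (i : Fin 3) (k : Fin 3 → ℤ) :
    negE i k = Function.update k i (-(k i)) := rfl

lemma negE_apply_self (i : Fin 3) (k : Fin 3 → ℤ) : negE i k i = -(k i) := by
  simp [negE_apply]

lemma negE_apply_ne (i : Fin 3) (k : Fin 3 → ℤ) (j : Fin 3) (h : j ≠ i) :
    negE i k j = k j := by
  simp [negE_apply, Function.update_of_ne h]

lemma negE_zero (i : Fin 3) : negE i 0 = 0 := by
  funext j
  rcases eq_or_ne j i with rfl | h
  · simp [negE_apply]
  · simp [negE_apply, Function.update_of_ne h]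

lemma negE_invol (i : Fin 3) (k : Fin 3 → ℤ) : negE i (negE i k) = k := by
  funext j
  rcases eq_or_ne j i with rfl | h
  · simp [negE_apply]
  · simp [negE_apply, Function.update_of_ne h]

lemma negE_zero_iff (i : Fin 3) (k : Fin 3 → ℤ) : negE i k = 0 ↔ k = 0 := by
  constructor
  · intro h
    have h2 := congrArg (negE i) h
    rw [negE_zero, negE_invol] at h2
    exact h2
  · intro h; rw [h, negE_zero]

lemma nrm3_negE (i : Fin 3) (k : Fin 3 → ℤ) : nrm3 (negE i k) = nrm3 k := by
  unfold nrm3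
  apply congrArg
  fin_cases i <;> simp [negE_apply, Function.update]

/-- coordinate permutation of `ℤ³`. -/
noncomputable def swE (p : Equiv.Perm (Fin 3)) : (Fin 3 → ℤ) ≃ (Fin 3 → ℤ) :=
  Equiv.arrowCongr p (Equiv.refl ℤ)

lemma swE_apply (p : Equiv.Perm (Fin 3)) (k : Fin 3 → ℤ) (j : Fin 3) :
    swE p k j = k (p.symm j) := by
  simp [swE, Equiv.arrowCongr]

lemma swE_zero (p : Equiv.Perm (Fin 3)) : swE p 0 = 0 := by
  funext j; simp [swE_apply]

lemma swE_zero_iff (p : Equiv.Perm (Fin 3)) (k : Fin 3 → ℤ) :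
    swE p k = 0 ↔ k = 0 := by
  constructor
  · intro h
    have := (swE p).injective (h.trans (swE_zero p).symm)
    exact this
  · intro h; rw [h, swE_zero]

lemma nrm3_swE01 (k : Fin 3 → ℤ) : nrm3 (swE (Equiv.swap 0 1) k) = nrm3 k := by
  unfold nrm3
  apply congrArg
  simp [swE_apply, Equiv.swap_apply_def]
  ring

lemma nrm3_swE12 (k : Fin 3 → ℤ) : nrm3 (swE (Equiv.swap 1 2) k) = nrm3 k := by
  unfold nrm3
  apply congrArg
  simp [swE_apply, Equiv.swap_apply_def]
  ring

lemma nrm3_sq' (k : Fin 3 → ℤ) :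
    nrm3 k ^ 2 = ((k 0 : ℝ)) ^ 2 + ((k 1 : ℝ)) ^ 2 + ((k 2 : ℝ)) ^ 2 :=
  Real.sq_sqrt (by positivity)

/-- a cube containing the shell `n ≤ |k| ≤ 2n`. -/
noncomputable def shellT (n : ℕ) : Finset (Fin 3 → ℤ) :=
  Fintype.piFinset fun _ => Finset.Icc (-(2*(n:ℤ))) (2*(n:ℤ))

lemma mem_shellT {n : ℕ} {k : Fin 3 → ℤ}
    (h : k ≠ 0 ∧ (n:ℝ) ≤ nrm3 k ∧ nrm3 k ≤ 2*n) : k ∈ shellT n := by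
  rw [shellT, Fintype.mem_piFinset]
  intro i
  rw [Finset.mem_Icc]
  have hb : nrm3 k ^ 2 ≤ (2*(n:ℝ))^2 := by
    have h2 := h.2.2
    nlinarith [nrm3_nonneg k]
  rw [nrm3_sq'] at hb
  have hi : ((k i:ℝ))^2 ≤ (2*(n:ℝ))^2 := by
    have h1 : ((k i:ℝ))^2 ≤ ∑ j : Fin 3, ((k j:ℝ))^2 :=
      Finset.single_le_sum (f := fun j => ((k j:ℝ))^2) (fun j _ => sq_nonneg _)
        (Finset.mem_univ i)
    rw [Fin.sum_univ_three] at h1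
    linarith
  have hn0 : (0:ℝ) ≤ 2*(n:ℝ) := by positivity
  constructor
  · have : -(2*(n:ℝ)) ≤ (k i:ℝ) := by nlinarith [sq_nonneg ((k i:ℝ) + 2*(n:ℝ))]
    exact_mod_cast this
  · have : (k i:ℝ) ≤ 2*(n:ℝ) := by nlinarith [sq_nonneg ((k i:ℝ) - 2*(n:ℝ))]
    exact_mod_cast this

lemma summable_shell (n : ℕ) (g : (Fin 3 → ℤ) → ℝ) :
    Summable (fun k : Fin 3 → ℤ =>
      if k ≠ 0 ∧ (n:ℝ) ≤ nrm3 k ∧ nrm3 k ≤ 2*n then g k else 0) :=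
  summable_of_ne_finset_zero (s := shellT n) fun k hk => by
    rw [if_neg]; intro hcond; exact hk (mem_shellT hcond)

/-- second moments over the shell. -/
noncomputable def Mfun (n : ℕ) (i i' : Fin 3) : ℝ :=
  ∑' k : Fin 3 → ℤ,
    if k ≠ 0 ∧ (n:ℝ) ≤ nrm3 k ∧ nrm3 k ≤ 2*n then ((k i:ℝ) * (k i':ℝ)) / nrm3 k ^ 5 else 0

lemma Mzero (n : ℕ) (i i' : Fin 3) (hne : i ≠ i') : Mfun n i i' = 0 := by
  set f := fun k : Fin 3 → ℤ =>
    (if k ≠ 0 ∧ (n:ℝ) ≤ nrm3 k ∧ nrm3 k ≤ 2*(n:ℝ) then ((k i:ℝ) * (k i':ℝ)) / nrm3 k ^ 5 else 0)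
    with hf
  have h1 : ∀ k, f (negE i k) = - f k := by
    intro k
    rw [hf]
    simp only [ne_eq, negE_zero_iff, nrm3_negE, negE_apply_self,
      negE_apply_ne i k i' (Ne.symm hne)]
    by_cases h : ¬k = 0 ∧ (n:ℝ) ≤ nrm3 k ∧ nrm3 k ≤ 2*(n:ℝ)
    · rw [if_pos h, if_pos h]
      push_cast
      ring
    · rw [if_neg h, if_neg h, neg_zero]
  have h2 := (negE i).tsum_eq f
  have h3 : ∑' k, f (negE i k) = - ∑' k, f k := by
    calc ∑' k, f (negE i k) = ∑' k, - f k := by exact tsum_congr h1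
    _ = - ∑' k, f k := tsum_neg
  rw [h2] at h3
  have : Mfun n i i' = ∑' k, f k := rfl
  rw [this]
  linarith

lemma Mdiag_eq01 (n : ℕ) : Mfun n 0 0 = Mfun n 1 1 := by
  have h2 := (swE (Equiv.swap 0 1)).tsum_eq
    (fun k : Fin 3 → ℤ =>
      if k ≠ 0 ∧ (n:ℝ) ≤ nrm3 k ∧ nrm3 k ≤ 2*(n:ℝ) then ((k 0:ℝ) * (k 0:ℝ)) / nrm3 k ^ 5 else 0)
  rw [Mfun, ← h2]
  apply tsum_congr
  intro k
  simp only [ne_eq, swE_zero_iff, nrm3_swE01, swE_apply, Equiv.symm_swap,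
    Equiv.swap_apply_left]

lemma Mdiag_eq12 (n : ℕ) : Mfun n 1 1 = Mfun n 2 2 := by
  have h2 := (swE (Equiv.swap 1 2)).tsum_eq
    (fun k : Fin 3 → ℤ =>
      if k ≠ 0 ∧ (n:ℝ) ≤ nrm3 k ∧ nrm3 k ≤ 2*(n:ℝ) then ((k 1:ℝ) * (k 1:ℝ)) / nrm3 k ^ 5 else 0)
  rw [Mfun, ← h2]
  apply tsum_congr
  intro k
  simp only [ne_eq, swE_zero_iff, nrm3_swE12, swE_apply, Equiv.symm_swap,
    Equiv.swap_apply_left]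

lemma Msum (n : ℕ) :
    Mfun n 0 0 + Mfun n 1 1 + Mfun n 2 2
      = ∑' k : Fin 3 → ℤ,
          if k ≠ 0 ∧ (n:ℝ) ≤ nrm3 k ∧ nrm3 k ≤ 2*n then 1 / nrm3 k ^ 3 else 0 := by
  rw [Mfun, Mfun, Mfun, ← Summable.tsum_add (summable_shell n _) (summable_shell n _),
    ← Summable.tsum_add ((summable_shell n _).add (summable_shell n _)) (summable_shell n _)]
  apply tsum_congr
  intro k
  by_cases h : ¬k = 0 ∧ (n:ℝ) ≤ nrm3 k ∧ nrm3 k ≤ 2*(n:ℝ)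
  · simp only [ne_eq, if_pos h]
    have hN : 0 < nrm3 k := by
      have hx : ((k 0:ℝ))^2 + ((k 1:ℝ))^2 + ((k 2:ℝ))^2 ≠ 0 := by
        intro h0
        apply h.1
        have h0' : (k 0:ℝ) = 0 := by nlinarith [sq_nonneg ((k 0:ℝ)), sq_nonneg ((k 1:ℝ)), sq_nonneg ((k 2:ℝ))]
        have h1' : (k 1:ℝ) = 0 := by nlinarith [sq_nonneg ((k 0:ℝ)), sq_nonneg ((k 1:ℝ)), sq_nonneg ((k 2:ℝ))]
        have h2' : (k 2:ℝ) = 0 := by nlinarith [sq_nonneg ((k 0:ℝ)), sq_nonneg ((k 1:ℝ)), sq_nonneg ((k 2:ℝ))]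
        funext j
        fin_cases j
        · exact_mod_cast h0'
        · exact_mod_cast h1'
        · exact_mod_cast h2'
      exact Real.sqrt_pos.mpr (lt_of_le_of_ne (by positivity) (Ne.symm hx))
    have hs := nrm3_sq' k
    rw [← add_div, ← add_div, div_eq_div_iff (by positivity) (by positivity)]
    linear_combination (-(nrm3 k ^ 3)) * hs
  · simp only [ne_eq, if_neg h, add_zero]

lemma Mdiag (n : ℕ) (i : Fin 3) :
    Mfun n i i
      = (∑' k : Fin 3 → ℤ,
          if k ≠ 0 ∧ (n:ℝ) ≤ nrm3 k ∧ nrm3 k ≤ 2*n then 1 / nrm3 k ^ 3 else 0) / 3 := by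
  have e01 := Mdiag_eq01 n
  have e12 := Mdiag_eq12 n
  have hs := Msum n
  fin_cases i
  · show Mfun n 0 0 = _
    linarith
  · show Mfun n 1 1 = _
    linarith
  · show Mfun n 2 2 = _
    linarith

lemma shell_id (n : ℕ) (v : Fin 3 → ℂ) :
    ∑' k : Fin 3 → ℤ,
        (if k ≠ 0 ∧ (n:ℝ) ≤ nrm3 k ∧ nrm3 k ≤ 2*n then
            ‖dotZ k v‖ ^ 2 / nrm3 k ^ 5 else 0)
      = (∑' k : Fin 3 → ℤ,
            if k ≠ 0 ∧ (n:ℝ) ≤ nrm3 k ∧ nrm3 k ≤ 2*n then 1 / nrm3 k ^ 3 else 0) / 3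
          * vnSq v := by
  have hpt : ∀ k : Fin 3 → ℤ, ‖dotZ k v‖ ^ 2
      = ∑ p : Fin 3 × Fin 3,
          ((k p.1:ℝ) * (k p.2:ℝ)) * ((v p.1) * (starRingEnd ℂ) (v p.2)).re := by
    intro k
    simp only [dotZ, Fin.sum_univ_three, Complex.sq_norm, Complex.normSq_apply,
      Fintype.sum_prod_type, Complex.add_re, Complex.add_im, Complex.mul_re, Complex.mul_im,
      Complex.ofReal_re, Complex.ofReal_im, Complex.conj_re, Complex.conj_im,
      Complex.intCast_re, Complex.intCast_im]
    ring
  have heq : (fun k : Fin 3 → ℤ =>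
      (if k ≠ 0 ∧ (n:ℝ) ≤ nrm3 k ∧ nrm3 k ≤ 2*(n:ℝ) then
          ‖dotZ k v‖ ^ 2 / nrm3 k ^ 5 else 0))
      = fun k => ∑ p : Fin 3 × Fin 3,
          (if k ≠ 0 ∧ (n:ℝ) ≤ nrm3 k ∧ nrm3 k ≤ 2*(n:ℝ) then
              ((k p.1:ℝ) * (k p.2:ℝ)) / nrm3 k ^ 5 else 0)
            * ((v p.1) * (starRingEnd ℂ) (v p.2)).re := by
    funext k
    by_cases h : ¬k = 0 ∧ (n:ℝ) ≤ nrm3 k ∧ nrm3 k ≤ 2*(n:ℝ)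
    · rw [if_pos h, hpt k, Finset.sum_div]
      refine Finset.sum_congr rfl fun p _ => ?_
      rw [if_pos h]
      ring
    · simp [h]
  rw [heq, Summable.tsum_finsetSum (fun p _ => Summable.mul_right _ (summable_shell n _))]
  have hM : ∀ p : Fin 3 × Fin 3,
      (∑' k : Fin 3 → ℤ,
        (if k ≠ 0 ∧ (n:ℝ) ≤ nrm3 k ∧ nrm3 k ≤ 2*(n:ℝ) then
            ((k p.1:ℝ) * (k p.2:ℝ)) / nrm3 k ^ 5 else 0)
          * ((v p.1) * (starRingEnd ℂ) (v p.2)).re)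
      = Mfun n p.1 p.2 * ((v p.1) * (starRingEnd ℂ) (v p.2)).re := fun p => tsum_mul_right
  simp only [hM]
  rw [Fintype.sum_prod_type, Fin.sum_univ_three]
  simp only [Fin.sum_univ_three, Mzero n 0 1 (by decide), Mzero n 0 2 (by decide),
    Mzero n 1 0 (by decide), Mzero n 1 2 (by decide), Mzero n 2 0 (by decide),
    Mzero n 2 1 (by decide), Mdiag n, zero_mul, add_zero, zero_add]
  simp only [vnSq, Fin.sum_univ_three, Complex.sq_norm, Complex.normSq_apply,
    Complex.mul_re, Complex.conj_re, Complex.conj_im]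
  ring

/-- Exact isotropic cross-product identity: with `σ_{k,j} = θ_{k,j} a_{k,j} e^{ik·x}`,
`{k/|k|, a_{k,1}, a_{k,2}}` an orthonormal system and isotropic coefficients
`|θ_{k,j}|² = c·1_{n ≤ |k| ≤ 2n}/|k|³`, for every `B ∈ L²` expanded as
`B = Σ_{h,l} b^{h,l} a_{h,l} e^{ih·x}` one has
`Σ_{k,j} ‖σ_{k,j} × B‖² = (4/3)·c·ζ^n_{s,3}·‖B‖²` where
`ζ^n_{s,3} = Σ_{n ≤ |k| ≤ 2n} |k|^{-3}` (computed here in Fourier, using Parseval). -/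
theorem isotropic_cross_identity (n : ℕ) (hn : 1 ≤ n) (c : ℝ) (hc : 0 < c)
    (a : (Fin 3 → ℤ) → Fin 2 → Fin 3 → ℝ)
    (hak : ∀ k, k ≠ 0 → ∀ j, ∑ i, a k j i * (k i : ℝ) = 0)
    (haunit : ∀ k, k ≠ 0 → ∀ j, ∑ i, a k j i * a k j i = 1)
    (haperp : ∀ k, k ≠ 0 → ∑ i, a k 0 i * a k 1 i = 0)
    (b : (Fin 3 → ℤ) → Fin 2 → ℂ)
    (Bhat : (Fin 3 → ℤ) → Fin 3 → ℂ)
    (hBhat : ∀ h i, Bhat h i = ∑ l, b h l * (a h l i : ℂ))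
    (hL2 : Summable fun h : Fin 3 → ℤ => vnSq (Bhat h)) :
    (∑' k : Fin 3 → ℤ, ∑ j : Fin 2,
        (if k ≠ 0 ∧ (n : ℝ) ≤ nrm3 k ∧ nrm3 k ≤ 2 * n then c / nrm3 k ^ 3 else 0) *
          ∑' h : Fin 3 → ℤ, vnSq (crossRC (a k j) (Bhat h)))
      = (4 / 3) * c *
          (∑' k : Fin 3 → ℤ,
            if k ≠ 0 ∧ (n : ℝ) ≤ nrm3 k ∧ nrm3 k ≤ 2 * n then 1 / nrm3 k ^ 3 else 0) *
          ∑' h : Fin 3 → ℤ, vnSq (Bhat h) := by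
  classical
  set P := ∑' h : Fin 3 → ℤ, vnSq (Bhat h) with hP
  have hpoint : ∀ k : Fin 3 → ℤ,
      (∑ j : Fin 2,
        (if k ≠ 0 ∧ (n : ℝ) ≤ nrm3 k ∧ nrm3 k ≤ 2 * n then c / nrm3 k ^ 3 else 0) *
          ∑' h : Fin 3 → ℤ, vnSq (crossRC (a k j) (Bhat h)))
      = (if k ≠ 0 ∧ (n : ℝ) ≤ nrm3 k ∧ nrm3 k ≤ 2 * n then (c * P) * (1 / nrm3 k ^ 3) else 0)
        + (if k ≠ 0 ∧ (n : ℝ) ≤ nrm3 k ∧ nrm3 k ≤ 2 * n then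
            (∑' h : Fin 3 → ℤ, c * (‖dotZ k (Bhat h)‖ ^ 2 / nrm3 k ^ 5)) else 0) := by
    intro k
    by_cases hcond : ¬k = 0 ∧ (n : ℝ) ≤ nrm3 k ∧ nrm3 k ≤ 2 * (n:ℝ)
    · have hk : k ≠ 0 := hcond.1
      have hN := nrm3_pos k hk
      have hS : ∀ j : Fin 2, Summable fun h => vnSq (crossRC (a k j) (Bhat h)) := fun j =>
        Summable.of_nonneg_of_le (fun h => vnSq_nonneg _)
          (fun h => cross_sq_le (a k j) (haunit k hk j) (Bhat h)) hL2
      have hQ : Summable fun h => ‖dotZ k (Bhat h)‖ ^ 2 :=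
        Summable.of_nonneg_of_le (fun h => sq_nonneg _)
          (fun h => dot_sq_le k (Bhat h)) (hL2.mul_left _)
      rw [if_pos hcond, if_pos hcond, if_pos hcond, Fin.sum_univ_two, ← mul_add,
        ← Summable.tsum_add (hS 0) (hS 1)]
      have h1 : (∑' h : Fin 3 → ℤ,
            (vnSq (crossRC (a k 0) (Bhat h)) + vnSq (crossRC (a k 1) (Bhat h))))
          = P + (∑' h : Fin 3 → ℤ, ‖dotZ k (Bhat h)‖ ^ 2) / nrm3 k ^ 2 := by
        have h2 : ∀ h' : Fin 3 → ℤ,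
            vnSq (crossRC (a k 0) (Bhat h')) + vnSq (crossRC (a k 1) (Bhat h'))
            = vnSq (Bhat h') + ‖dotZ k (Bhat h')‖ ^ 2 / nrm3 k ^ 2 := by
          intro h'
          have hkey := key k hk (a k) (hak k hk) (haunit k hk) (haperp k hk) (Bhat h')
          rw [Fin.sum_univ_two] at hkey
          exact hkey
        rw [tsum_congr h2, Summable.tsum_add hL2 (hQ.div_const _), tsum_div_const]
      rw [h1]
      have h3 : (∑' h : Fin 3 → ℤ, c * (‖dotZ k (Bhat h)‖ ^ 2 / nrm3 k ^ 5))
          = c * ((∑' h : Fin 3 → ℤ, ‖dotZ k (Bhat h)‖ ^ 2) / nrm3 k ^ 5) := by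
        rw [tsum_mul_left, tsum_div_const]
      rw [h3]
      field_simp
    · rw [if_neg hcond, if_neg hcond, if_neg hcond]
      simp
  rw [tsum_congr hpoint,
    Summable.tsum_add (summable_shell n _) (summable_shell n _)]
  set Z := ∑' k : Fin 3 → ℤ,
      if k ≠ 0 ∧ (n : ℝ) ≤ nrm3 k ∧ nrm3 k ≤ 2 * n then 1 / nrm3 k ^ 3 else 0 with hZ
  have hT1 : (∑' k : Fin 3 → ℤ,
      if k ≠ 0 ∧ (n : ℝ) ≤ nrm3 k ∧ nrm3 k ≤ 2 * n then (c * P) * (1 / nrm3 k ^ 3) else 0)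
      = (c * P) * Z := by
    have hsplit : ∀ k : Fin 3 → ℤ,
        (if k ≠ 0 ∧ (n : ℝ) ≤ nrm3 k ∧ nrm3 k ≤ 2 * (n:ℝ) then (c * P) * (1 / nrm3 k ^ 3) else 0)
        = (c * P) * (if k ≠ 0 ∧ (n : ℝ) ≤ nrm3 k ∧ nrm3 k ≤ 2 * (n:ℝ) then 1 / nrm3 k ^ 3 else 0) := by
      intro k
      by_cases h : ¬k = 0 ∧ (n : ℝ) ≤ nrm3 k ∧ nrm3 k ≤ 2 * (n:ℝ) <;> simp [h]
    rw [tsum_congr hsplit, tsum_mul_left, hZ]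
  have hT2 : (∑' k : Fin 3 → ℤ,
      if k ≠ 0 ∧ (n : ℝ) ≤ nrm3 k ∧ nrm3 k ≤ 2 * n then
        (∑' h : Fin 3 → ℤ, c * (‖dotZ k (Bhat h)‖ ^ 2 / nrm3 k ^ 5)) else 0)
      = c * (Z / 3) * P := by
    have hG : ∀ k : Fin 3 → ℤ,
        (if k ≠ 0 ∧ (n : ℝ) ≤ nrm3 k ∧ nrm3 k ≤ 2 * (n:ℝ) then
            (∑' h : Fin 3 → ℤ, c * (‖dotZ k (Bhat h)‖ ^ 2 / nrm3 k ^ 5)) else 0)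
        = ∑' h : Fin 3 → ℤ, c *
            (if k ≠ 0 ∧ (n : ℝ) ≤ nrm3 k ∧ nrm3 k ≤ 2 * (n:ℝ) then
              ‖dotZ k (Bhat h)‖ ^ 2 / nrm3 k ^ 5 else 0) := by
      intro k
      by_cases h : ¬k = 0 ∧ (n : ℝ) ≤ nrm3 k ∧ nrm3 k ≤ 2 * (n:ℝ)
      · rw [if_pos h]
        exact tsum_congr fun h' => by rw [if_pos h]
      · rw [if_neg h]
        simp [h]
    rw [tsum_congr hG]
    have hvanish : ∀ k ∉ shellT n,
        (∑' h : Fin 3 → ℤ, c *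
          (if k ≠ 0 ∧ (n : ℝ) ≤ nrm3 k ∧ nrm3 k ≤ 2 * (n:ℝ) then
            ‖dotZ k (Bhat h)‖ ^ 2 / nrm3 k ^ 5 else 0)) = 0 := by
      intro k hk
      have h : ¬(¬k = 0 ∧ (n : ℝ) ≤ nrm3 k ∧ nrm3 k ≤ 2 * (n:ℝ)) := fun hc => hk (mem_shellT hc)
      simp [h]
    rw [tsum_eq_sum hvanish]
    have hsummable : ∀ k ∈ shellT n, Summable fun h : Fin 3 → ℤ => c *
        (if k ≠ 0 ∧ (n : ℝ) ≤ nrm3 k ∧ nrm3 k ≤ 2 * (n:ℝ) then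
          ‖dotZ k (Bhat h)‖ ^ 2 / nrm3 k ^ 5 else 0) := by
      intro k _
      by_cases h : ¬k = 0 ∧ (n : ℝ) ≤ nrm3 k ∧ nrm3 k ≤ 2 * (n:ℝ)
      · simp only [if_pos h]
        have hQ : Summable fun h' => ‖dotZ k (Bhat h')‖ ^ 2 :=
          Summable.of_nonneg_of_le (fun h' => sq_nonneg _)
            (fun h' => dot_sq_le k (Bhat h')) (hL2.mul_left _)
        exact (hQ.div_const _).mul_left c
      · simp only [if_neg h, mul_zero]
        exact summable_zero
    rw [← Summable.tsum_finsetSum hsummable]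
    have hinner : ∀ h' : Fin 3 → ℤ,
        (∑ k ∈ shellT n, c *
          (if k ≠ 0 ∧ (n : ℝ) ≤ nrm3 k ∧ nrm3 k ≤ 2 * (n:ℝ) then
            ‖dotZ k (Bhat h')‖ ^ 2 / nrm3 k ^ 5 else 0))
        = (c * (Z / 3)) * vnSq (Bhat h') := by
      intro h'
      rw [← Finset.mul_sum]
      have hv : ∀ k ∉ shellT n,
          (if k ≠ 0 ∧ (n : ℝ) ≤ nrm3 k ∧ nrm3 k ≤ 2 * (n:ℝ) then
            ‖dotZ k (Bhat h')‖ ^ 2 / nrm3 k ^ 5 else 0) = 0 := by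
        intro k hk
        exact if_neg fun hc => hk (mem_shellT hc)
      rw [← tsum_eq_sum (L := SummationFilter.unconditional _) hv, shell_id n (Bhat h'), hZ]
      ring
    rw [tsum_congr hinner, tsum_mul_left]
  rw [hT1, hT2]
  ring
end
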